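/- Suppose the feasible set Ω is nonempty and contained in the closed Euclidean ball of radius C > 0 centered at the origin. Then the gradient of the optimal value function is Lipschitz continuous on the nonnegative orthant: there exists L ≥ 0 such that for all w₁, w₂ ∈ ℝ^r with w₁ ≥ 0 and w₂ ≥ 0, ‖∇V(w₂) − ∇V(w₁)‖₂ ≤ L·‖w₂ − w₁‖₂. -/

import Mathlib

/-!
A minimizer ν of a quadratic objective over a convex set satisfies the variational inequality
`0 ≤ ⟨2 Q ν + q, μ - ν⟩` for every feasible `μ`. Adding these inequalities for the weights `w₁`
and `w₂`, the regularizer `ε I` makes the left side at least `2 ε ‖ν*(w₂) - ν*(w₁)‖²`, while the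
right side is at most `(2 C + 1) ‖w₂ - w₁‖ ‖ν*(w₂) - ν*(w₁)‖` because the data depend linearly and
boundedly on `w` and the feasible set lies in the ball of radius `C`. Hence `ν*` is Lipschitz with
constant `(2 C + 1) / (2 ε)`. Each coordinate of `∇V(w)` is a quadratic expression in `ν*(w)`,
Lipschitz with constant `2 C + 1` on that ball, so `∇V` is Lipschitz with constant
`√r (2 C + 1)² / (2 ε)`.
-/

open Matrix

/-- Euclidean (ℓ₂) norm of a finite real vector. -/
noncomputable def l2norm {k : ℕ} (v : Fin k → ℝ) : ℝ := Real.sqrt (∑ i, v i ^ 2)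

open Filter Topology

theorem nonneg_of_forall_mul_add_sq_mul_nonneg {a b : ℝ}
    (h : ∀ t : ℝ, 0 < t → t ≤ 1 → 0 ≤ t * a + t ^ 2 * b) : 0 ≤ a := by
  have hlim : Tendsto (fun t : ℝ => a + t * b) (𝓝[>] 0) (𝓝 a) := by
    have hcont : Continuous fun t : ℝ => a + t * b := by fun_prop
    exact (hcont.tendsto' 0 a (by simp)).mono_left nhdsWithin_le_nhds
  refine ge_of_tendsto hlim ?_
  filter_upwards [Ioc_mem_nhdsGT (zero_lt_one' ℝ)] with t ⟨ht, ht1⟩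
  have := h t ht ht1
  nlinarith

section Quadratic

variable {ι : Type*} [Fintype ι] {S : Set (ι → ℝ)} {Q : Matrix ι ι ℝ} {q x y : ι → ℝ}

theorem Matrix.IsSymm.dotProduct_mulVec_comm (hQ : Q.IsSymm) (u v : ι → ℝ) :
    u ⬝ᵥ Q *ᵥ v = v ⬝ᵥ Q *ᵥ u := by
  rw [dotProduct_mulVec, ← mulVec_transpose, hQ, dotProduct_comm]

theorem Matrix.IsSymm.quadratic_add_smul (hQ : Q.IsSymm) (x δ : ι → ℝ) (t : ℝ) :
    (x + t • δ) ⬝ᵥ Q *ᵥ (x + t • δ) + q ⬝ᵥ (x + t • δ) =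
      x ⬝ᵥ Q *ᵥ x + q ⬝ᵥ x + t * (2 * (x ⬝ᵥ Q *ᵥ δ) + q ⬝ᵥ δ) + t ^ 2 * (δ ⬝ᵥ Q *ᵥ δ) := by
  have hswap := hQ.dotProduct_mulVec_comm δ x
  simp only [mulVec_add, mulVec_smul, dotProduct_add, add_dotProduct, smul_dotProduct,
    dotProduct_smul, smul_eq_mul, hswap]
  ring

theorem Matrix.IsSymm.variational_inequality (hQ : Q.IsSymm)
    (hS : Convex ℝ S) (hx : x ∈ S) (hmin : IsMinOn (fun y => y ⬝ᵥ Q *ᵥ y + q ⬝ᵥ y) S x)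
    (hy : y ∈ S) : 0 ≤ 2 * (x ⬝ᵥ Q *ᵥ (y - x)) + q ⬝ᵥ (y - x) := by
  refine nonneg_of_forall_mul_add_sq_mul_nonneg (b := (y - x) ⬝ᵥ Q *ᵥ (y - x)) fun t ht ht1 => ?_
  have hmem : x + t • (y - x) ∈ S := by
    simpa using hS.add_smul_sub_mem hx hy ⟨ht.le, ht1⟩
  have := isMinOn_iff.mp hmin _ hmem
  rw [hQ.quadratic_add_smul] at this
  linarith

variable {Q₁ Q₂ : Matrix ι ι ℝ} {q₁ q₂ x₁ x₂ : ι → ℝ}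

theorem two_mul_quadratic_sub_le_of_isMinOn (hQ₁ : Q₁.IsSymm) (hQ₂ : Q₂.IsSymm)
    (hS : Convex ℝ S) (hx₁ : x₁ ∈ S) (hx₂ : x₂ ∈ S)
    (hmin₁ : IsMinOn (fun y => y ⬝ᵥ Q₁ *ᵥ y + q₁ ⬝ᵥ y) S x₁)
    (hmin₂ : IsMinOn (fun y => y ⬝ᵥ Q₂ *ᵥ y + q₂ ⬝ᵥ y) S x₂) :
    2 * ((x₂ - x₁) ⬝ᵥ Q₁ *ᵥ (x₂ - x₁)) ≤
      -(2 * (x₂ ⬝ᵥ (Q₂ - Q₁) *ᵥ (x₂ - x₁)) + (q₂ - q₁) ⬝ᵥ (x₂ - x₁)) := by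
  have h₁ := hQ₁.variational_inequality hS hx₁ hmin₁ hx₂
  have h₂ := hQ₂.variational_inequality hS hx₂ hmin₂ hx₁
  rw [← neg_sub x₂ x₁] at h₂
  simp only [mulVec_neg, dotProduct_neg, sub_mulVec, dotProduct_sub, sub_dotProduct] at h₁ h₂ ⊢
  linarith

end Quadratic

theorem convex_setOf_mulVec_add_nonpos {m n : Type*} [Fintype n] (A : Matrix m n ℝ)
    (b : m → ℝ) : Convex ℝ {ν | ∀ i, (A *ᵥ ν) i + b i ≤ 0} := by
  have : {ν | ∀ i, (A *ᵥ ν) i + b i ≤ 0} = ⋂ i, {ν | (A *ᵥ ν) i ≤ -b i} := by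
    ext ν; simp [le_neg_iff_add_nonpos_right]
  rw [this]
  exact convex_iInter fun i =>
    convex_halfSpace_le ((LinearMap.proj i).comp (Matrix.mulVecLin A)).isLinear _

section L2norm

variable {k : ℕ}

theorem l2norm_nonneg (v : Fin k → ℝ) : 0 ≤ l2norm v := Real.sqrt_nonneg _

theorem dotProduct_self_eq_l2norm_sq (v : Fin k → ℝ) : v ⬝ᵥ v = l2norm v ^ 2 := by
  rw [l2norm, Real.sq_sqrt (by positivity)]
  simp [dotProduct, sq]

theorem abs_dotProduct_le_l2norm_mul (v u : Fin k → ℝ) : |v ⬝ᵥ u| ≤ l2norm v * l2norm u := by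
  rw [← Real.sqrt_sq_eq_abs, l2norm, l2norm, ← Real.sqrt_mul (by positivity)]
  exact Real.sqrt_le_sqrt (by simpa [dotProduct] using Finset.sum_mul_sq_le_sq_mul_sq _ v u)

theorem l2norm_single (i : Fin k) : l2norm (Pi.single i (1 : ℝ)) = 1 := by
  simp [l2norm, Pi.single_apply, ite_pow]

theorem l2norm_le_sqrt_card_mul {v : Fin k → ℝ} {a : ℝ} (ha : 0 ≤ a) (h : ∀ i, |v i| ≤ a) :
    l2norm v ≤ Real.sqrt k * a := by
  have hsum : ∑ i, v i ^ 2 ≤ ∑ _i : Fin k, a ^ 2 :=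
    Finset.sum_le_sum fun i _ => sq_le_sq' (abs_le.mp (h i)).1 (abs_le.mp (h i)).2
  calc l2norm v ≤ Real.sqrt (k * a ^ 2) := Real.sqrt_le_sqrt (by simpa using hsum)
    _ = Real.sqrt k * a := by rw [Real.sqrt_mul (Nat.cast_nonneg k), Real.sqrt_sq ha]

end L2norm

section LCQP

variable {N r : ℕ} {ε C : ℝ} {D : (Fin r → ℝ) →ₗ[ℝ] Matrix (Fin N) (Fin N) ℝ}
  {c : (Fin r → ℝ) →ₗ[ℝ] (Fin N → ℝ)} {S : Set (Fin N → ℝ)} {x₁ x₂ : Fin N → ℝ}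

theorem abs_dotProduct_mulVec_le (hDbound : ∀ w ν, l2norm (D w *ᵥ ν) ≤ l2norm w * l2norm ν)
    (u v : Fin N → ℝ) (w : Fin r → ℝ) :
    |u ⬝ᵥ D w *ᵥ v| ≤ l2norm u * (l2norm w * l2norm v) :=
  (abs_dotProduct_le_l2norm_mul _ _).trans
    (mul_le_mul_of_nonneg_left (hDbound w v) (l2norm_nonneg u))

theorem abs_dotProduct_le_of_l2norm_map_le (hcbound : ∀ w, l2norm (c w) ≤ l2norm w)
    (w : Fin r → ℝ) (v : Fin N → ℝ) : |c w ⬝ᵥ v| ≤ l2norm w * l2norm v :=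
  (abs_dotProduct_le_l2norm_mul _ _).trans
    (mul_le_mul_of_nonneg_right (hcbound w) (l2norm_nonneg v))

theorem l2norm_sub_le_of_isMinOn (hε : 0 < ε) (hS : Convex ℝ S)
    (hDdiag : ∀ w, (D w).IsDiag) (hDbound : ∀ w ν, l2norm (D w *ᵥ ν) ≤ l2norm w * l2norm ν)
    (hcbound : ∀ w, l2norm (c w) ≤ l2norm w) {w₁ w₂ : Fin r → ℝ} (hw₁ : (D w₁).PosSemidef)
    (hx₁ : x₁ ∈ S) (hx₂ : x₂ ∈ S) (hx₂C : l2norm x₂ ≤ C)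
    (hmin₁ : IsMinOn (fun ν => ν ⬝ᵥ (D w₁ + ε • 1) *ᵥ ν + c w₁ ⬝ᵥ ν) S x₁)
    (hmin₂ : IsMinOn (fun ν => ν ⬝ᵥ (D w₂ + ε • 1) *ᵥ ν + c w₂ ⬝ᵥ ν) S x₂) :
    l2norm (x₂ - x₁) ≤ (2 * C + 1) / (2 * ε) * l2norm (w₂ - w₁) := by
  set δ := x₂ - x₁
  set Δ := w₂ - w₁
  have hsymm (w : Fin r → ℝ) : (D w + ε • 1).IsSymm := (hDdiag w).isSymm.add (isSymm_one.smul ε)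
  have hcmp := two_mul_quadratic_sub_le_of_isMinOn (hsymm w₁) (hsymm w₂) hS hx₁ hx₂ hmin₁ hmin₂
  have hQ : D w₂ + ε • 1 - (D w₁ + ε • 1) = D Δ := by simp [Δ, map_sub]
  have hq : c w₂ - c w₁ = c Δ := (map_sub c w₂ w₁).symm
  rw [hQ, hq] at hcmp
  have hstrong : ε * l2norm δ ^ 2 ≤ δ ⬝ᵥ (D w₁ + ε • 1) *ᵥ δ := by
    have hpsd : 0 ≤ δ ⬝ᵥ D w₁ *ᵥ δ := by simpa using hw₁.dotProduct_mulVec_nonneg δ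
    rw [add_mulVec, dotProduct_add, smul_mulVec, one_mulVec, dotProduct_smul, smul_eq_mul,
      dotProduct_self_eq_l2norm_sq]
    linarith
  have hC : 0 ≤ C := (l2norm_nonneg x₂).trans hx₂C
  have hD := abs_dotProduct_mulVec_le hDbound x₂ δ Δ
  have hc := abs_dotProduct_le_of_l2norm_map_le hcbound Δ δ
  have hbound : 2 * ε * l2norm δ ^ 2 ≤ (2 * C + 1) * l2norm Δ * l2norm δ := by
    have hx₂D : l2norm x₂ * (l2norm Δ * l2norm δ) ≤ C * (l2norm Δ * l2norm δ) :=
      mul_le_mul_of_nonneg_right hx₂C (mul_nonneg (l2norm_nonneg Δ) (l2norm_nonneg δ))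
    nlinarith [neg_abs_le (x₂ ⬝ᵥ D Δ *ᵥ δ), neg_abs_le (c Δ ⬝ᵥ δ)]
  rcases (l2norm_nonneg δ).eq_or_lt with hδ | hδ
  · rw [← hδ]; exact mul_nonneg (by positivity) (l2norm_nonneg Δ)
  · rw [div_mul_eq_mul_div, le_div_iff₀ (by positivity)]
    nlinarith

variable (D c) in
def lcqpValueGrad (ν : Fin N → ℝ) : Fin r → ℝ :=
  fun k => ν ⬝ᵥ D (Pi.single k 1) *ᵥ ν + c (Pi.single k 1) ⬝ᵥ ν

theorem l2norm_lcqpValueGrad_sub_le (hDdiag : ∀ w, (D w).IsDiag)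
    (hDbound : ∀ w ν, l2norm (D w *ᵥ ν) ≤ l2norm w * l2norm ν)
    (hcbound : ∀ w, l2norm (c w) ≤ l2norm w)
    (hx₁C : l2norm x₁ ≤ C) (hx₂C : l2norm x₂ ≤ C) :
    l2norm (lcqpValueGrad D c x₂ - lcqpValueGrad D c x₁) ≤
      Real.sqrt r * ((2 * C + 1) * l2norm (x₂ - x₁)) := by
  set δ := x₂ - x₁
  have hδ := l2norm_nonneg δ
  have hC : 0 ≤ C := (l2norm_nonneg x₁).trans hx₁C
  refine l2norm_le_sqrt_card_mul (by positivity) fun k => ?_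
  have hsymm := (hDdiag (Pi.single k 1)).isSymm
  have hdiff : (lcqpValueGrad D c x₂ - lcqpValueGrad D c x₁) k =
      x₂ ⬝ᵥ D (Pi.single k 1) *ᵥ δ + x₁ ⬝ᵥ D (Pi.single k 1) *ᵥ δ + c (Pi.single k 1) ⬝ᵥ δ := by
    simp only [lcqpValueGrad, Pi.sub_apply, δ, mulVec_sub, dotProduct_sub,
      hsymm.dotProduct_mulVec_comm x₁ x₂]
    ring
  have h₂ := abs_dotProduct_mulVec_le hDbound x₂ δ (Pi.single k 1)
  have h₁ := abs_dotProduct_mulVec_le hDbound x₁ δ (Pi.single k 1)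
  have hc := abs_dotProduct_le_of_l2norm_map_le hcbound (Pi.single k 1) δ
  rw [l2norm_single, one_mul] at h₁ h₂ hc
  rw [hdiff]
  calc _ ≤ |x₂ ⬝ᵥ D (Pi.single k 1) *ᵥ δ| + |x₁ ⬝ᵥ D (Pi.single k 1) *ᵥ δ| +
        |c (Pi.single k 1) ⬝ᵥ δ| := abs_add_three _ _ _
    _ ≤ C * l2norm δ + C * l2norm δ + l2norm δ := by
        gcongr
        · exact h₂.trans (mul_le_mul_of_nonneg_right hx₂C hδ)
        · exact h₁.trans (mul_le_mul_of_nonneg_right hx₁C hδ)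
    _ = (2 * C + 1) * l2norm δ := by ring

end LCQP

theorem lcqp_value_gradient_lipschitz_general
    (N M r : ℕ)
    (ε : ℝ) (hε : 0 < ε)
    (A : Matrix (Fin M) (Fin N) ℝ) (b : Fin M → ℝ)
    (Ω : Set (Fin N → ℝ))
    (hΩ : Ω = {ν | ∀ i, A.mulVec ν i + b i ≤ 0})
    (D : (Fin r → ℝ) →ₗ[ℝ] Matrix (Fin N) (Fin N) ℝ)
    (hDdiag : ∀ w, (D w).IsDiag)
    (hDpsd : ∀ w : Fin r → ℝ, 0 ≤ w → (D w).PosSemidef)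
    (hDbound : ∀ (w : Fin r → ℝ) (ν : Fin N → ℝ),
      l2norm ((D w).mulVec ν) ≤ l2norm w * l2norm ν)
    (c : (Fin r → ℝ) →ₗ[ℝ] (Fin N → ℝ))
    (hcbound : ∀ w : Fin r → ℝ, l2norm (c w) ≤ l2norm w)
    (f : (Fin N → ℝ) → (Fin r → ℝ) → ℝ)
    (hf : ∀ ν w, f ν w =
      ν ⬝ᵥ ((D w + ε • (1 : Matrix (Fin N) (Fin N) ℝ)).mulVec ν) + c w ⬝ᵥ ν)
    (C : ℝ) (hC : 0 < C)
    (hΩball : ∀ ν ∈ Ω, l2norm ν ≤ C)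
    (νstar : (Fin r → ℝ) → (Fin N → ℝ))
    (hmin : ∀ w : Fin r → ℝ, 0 ≤ w →
      νstar w ∈ Ω ∧ (∀ ν ∈ Ω, f (νstar w) w ≤ f ν w) ∧
      (∀ ν ∈ Ω, (∀ ν' ∈ Ω, f ν w ≤ f ν' w) → ν = νstar w))
    (gradV : (Fin r → ℝ) → (Fin r → ℝ))
    (hgradformula : ∀ w : Fin r → ℝ, 0 ≤ w → ∀ k : Fin r,
      gradV w k = νstar w ⬝ᵥ (D (Pi.single k 1)).mulVec (νstar w) +
        c (Pi.single k 1) ⬝ᵥ νstar w) :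
    ∃ L : ℝ, 0 ≤ L ∧
      ∀ w₁ w₂ : Fin r → ℝ, 0 ≤ w₁ → 0 ≤ w₂ →
        l2norm (gradV w₂ - gradV w₁) ≤ L * l2norm (w₂ - w₁) := by
  have hconv : Convex ℝ Ω := hΩ ▸ convex_setOf_mulVec_add_nonpos A b
  have hmem : ∀ w, 0 ≤ w → νstar w ∈ Ω := fun w hw => (hmin w hw).1
  have hIsMin : ∀ w, 0 ≤ w →
      IsMinOn (fun ν => ν ⬝ᵥ (D w + ε • 1) *ᵥ ν + c w ⬝ᵥ ν) Ω (νstar w) := fun w hw =>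
    isMinOn_iff.mpr fun ν hν => by simpa only [hf] using (hmin w hw).2.1 ν hν
  have hgrad : ∀ w, 0 ≤ w → gradV w = lcqpValueGrad D c (νstar w) := fun w hw =>
    funext (hgradformula w hw)
  refine ⟨Real.sqrt r * (2 * C + 1) * ((2 * C + 1) / (2 * ε)), by positivity, ?_⟩
  intro w₁ w₂ hw₁ hw₂
  have hν := l2norm_sub_le_of_isMinOn hε hconv hDdiag hDbound hcbound (hDpsd w₁ hw₁)
    (hmem w₁ hw₁) (hmem w₂ hw₂) (hΩball _ (hmem w₂ hw₂)) (hIsMin w₁ hw₁) (hIsMin w₂ hw₂)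
  rw [hgrad w₁ hw₁, hgrad w₂ hw₂]
  calc _ ≤ Real.sqrt r * ((2 * C + 1) * l2norm (νstar w₂ - νstar w₁)) :=
        l2norm_lcqpValueGrad_sub_le hDdiag hDbound hcbound (hΩball _ (hmem w₁ hw₁))
          (hΩball _ (hmem w₂ hw₂))
    _ ≤ Real.sqrt r * ((2 * C + 1) * ((2 * C + 1) / (2 * ε) * l2norm (w₂ - w₁))) := by
        gcongr
    _ = _ := by ring

/-- The gradient of the optimal value function of the regularized
LCQP is Lipschitz continuous on the nonnegative orthant of symbolic weights. -/
theorem lcqp_value_gradient_lipschitz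
    (N M r : ℕ) (hN : 0 < N) (hM : 0 < M) (hr : 0 < r)
    (ε : ℝ) (hε : 0 < ε)
    (A : Matrix (Fin M) (Fin N) ℝ) (b : Fin M → ℝ)
    (Ω : Set (Fin N → ℝ))
    (hΩ : Ω = {ν | ∀ i, A.mulVec ν i + b i ≤ 0})
    (D : (Fin r → ℝ) →ₗ[ℝ] Matrix (Fin N) (Fin N) ℝ)
    (hDdiag : ∀ w, (D w).IsDiag)
    (hDpsd : ∀ w : Fin r → ℝ, 0 ≤ w → (D w).PosSemidef)
    (hDbound : ∀ (w : Fin r → ℝ) (ν : Fin N → ℝ),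
      l2norm ((D w).mulVec ν) ≤ l2norm w * l2norm ν)
    (c : (Fin r → ℝ) →ₗ[ℝ] (Fin N → ℝ))
    (hcbound : ∀ w : Fin r → ℝ, l2norm (c w) ≤ l2norm w)
    (f : (Fin N → ℝ) → (Fin r → ℝ) → ℝ)
    (hf : ∀ ν w, f ν w =
      ν ⬝ᵥ ((D w + ε • (1 : Matrix (Fin N) (Fin N) ℝ)).mulVec ν) + c w ⬝ᵥ ν)
    (C : ℝ) (hC : 0 < C)
    (hΩne : Ω.Nonempty)
    (hΩball : ∀ ν ∈ Ω, l2norm ν ≤ C)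
    (V : (Fin r → ℝ) → ℝ)
    (hV : ∀ w, V w = sInf ((fun ν => f ν w) '' Ω))
    (νstar : (Fin r → ℝ) → (Fin N → ℝ))
    (hmin : ∀ w : Fin r → ℝ, 0 ≤ w →
      νstar w ∈ Ω ∧ (∀ ν ∈ Ω, f (νstar w) w ≤ f ν w) ∧
      (∀ ν ∈ Ω, (∀ ν' ∈ Ω, f ν w ≤ f ν' w) → ν = νstar w))
    (gradV : (Fin r → ℝ) → (Fin r → ℝ))
    (hgradformula : ∀ w : Fin r → ℝ, 0 ≤ w → ∀ k : Fin r,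
      gradV w k = νstar w ⬝ᵥ (D (Pi.single k 1)).mulVec (νstar w) +
        c (Pi.single k 1) ⬝ᵥ νstar w)
    (hgrad : ∀ w : Fin r → ℝ, 0 ≤ w →
      ∃ L : (Fin r → ℝ) →L[ℝ] ℝ, HasFDerivAt V L w ∧
        ∀ k : Fin r, L (Pi.single k 1) = gradV w k) :
    ∃ L : ℝ, 0 ≤ L ∧
      ∀ w₁ w₂ : Fin r → ℝ, 0 ≤ w₁ → 0 ≤ w₂ →
        l2norm (gradV w₂ - gradV w₁) ≤ L * l2norm (w₂ - w₁) :=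
  lcqp_value_gradient_lipschitz_general N M r ε hε A b Ω hΩ D hDdiag hDpsd hDbound c hcbound f hf C
    hC hΩball νstar hmin gradV hgradformula
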